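/- arXiv:1609.09450 — 10 statements merged into one kernel-verified Lean document; each statement's English description precedes it below -/
import Mathlib

section
/- Let A ∈ ℝ^{m×N} be an arbitrary matrix and K ⊆ {1,…,N}. Then the following two conditions are equivalent: (i) every vector x₀ ∈ ℝ^N with nonnegative entries and support contained in K is the unique solution of the program (P₊) with data b = Ax₀; (ii) the indicator vector 𝟙_K is the unique solution of (P₊) with data b = A𝟙_K. -/
open Finset Matrix

/-- The indicator vector of a set `K ⊆ {1,…,N}`: 1 on `K`, 0 off `K`. -/
noncomputable def indVec {N : ℕ} (K : Finset (Fin N)) : Fin N → ℝ :=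
  fun i => if i ∈ K then 1 else 0

/-- `x₀` is the unique solution of the program (P₊): minimize `‖x‖₁` subject to
`Ax = b` and `x ∈ ℝ₊^N`, with data `b`. -/
def IsUniqueSolPlus {m N : ℕ} (A : Matrix (Fin m) (Fin N) ℝ) (b : Fin m → ℝ)
    (x₀ : Fin N → ℝ) : Prop :=
  A.mulVec x₀ = b ∧ (∀ i, 0 ≤ x₀ i) ∧
    ∀ z : Fin N → ℝ, A.mulVec z = b → (∀ i, 0 ≤ z i) → z ≠ x₀ →
      ∑ i, |x₀ i| < ∑ i, |z i|

theorem stmt0 {m N : ℕ} (A : Matrix (Fin m) (Fin N) ℝ) (K : Finset (Fin N)) :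
    (∀ x₀ : Fin N → ℝ, (∀ i, 0 ≤ x₀ i) → (∀ i, x₀ i ≠ 0 → i ∈ K) →
        IsUniqueSolPlus A (A.mulVec x₀) x₀) ↔
      IsUniqueSolPlus A (A.mulVec (indVec K)) (indVec K) := by
  constructor
  · intro h
    refine h (indVec K) (fun i => ?_) (fun i hi => ?_)
    · unfold indVec; split <;> norm_num
    · unfold indVec at hi
      by_contra hK
      simp [hK] at hi
  · rintro ⟨-, hKnn, hmin⟩
    intro x₀ hx₀nn hsupp
    refine ⟨rfl, hx₀nn, ?_⟩
    intro z hz hznn hne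
    set v : Fin N → ℝ := z - x₀ with hv
    have hAv : A.mulVec v = 0 := by
      rw [hv, Matrix.mulVec_sub, hz, sub_self]
    have hsnn : (0:ℝ) ≤ ∑ i, |v i| := Finset.sum_nonneg fun i _ => abs_nonneg _
    set t : ℝ := 1 / (1 + ∑ i, |v i|) with ht
    have htpos : 0 < t := by positivity
    set w : Fin N → ℝ := indVec K + t • v with hw
    have hAw : A.mulVec w = A.mulVec (indVec K) := by
      rw [hw, Matrix.mulVec_add, Matrix.mulVec_smul, hAv]
      simp
    have hwnn : ∀ i, 0 ≤ w i := by
      intro i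
      simp only [hw, Pi.add_apply, Pi.smul_apply, smul_eq_mul, indVec]
      by_cases hiK : i ∈ K
      · simp only [hiK, if_true]
        have h1 : |v i| ≤ ∑ j, |v j| :=
          Finset.single_le_sum (f := fun j => |v j|) (fun j _ => abs_nonneg _) (Finset.mem_univ i)
        have h2 : t * |v i| ≤ 1 := by
          rw [ht]
          rw [div_mul_eq_mul_div, div_le_one (by linarith)]
          linarith
        have := neg_abs_le (v i)
        nlinarith [abs_nonneg (v i)]
      · simp only [hiK, if_false]
        have hx0 : x₀ i = 0 := by
          by_contra h0; exact hiK (hsupp i h0)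
        have : v i = z i := by simp [hv, hx0]
        rw [this]
        simpa using mul_nonneg htpos.le (hznn i)
    have hwne : w ≠ indVec K := by
      intro hEq
      apply hne
      have : t • v = 0 := by
        have := congrArg (fun u => u - indVec K) hEq
        simpa [hw, add_sub_cancel_left] using this
      have hv0 : v = 0 := by
        have := smul_eq_zero.mp this
        rcases this with h | h
        · exact absurd h (ne_of_gt htpos)
        · exact h
      have := congrArg (fun u => u + x₀) hv0
      simpa [hv, sub_add_cancel] using this
    have key := hmin w hAw hwnn hwne
    -- rewrite absolute values as values
    have hsum_ind : ∑ i, |indVec K i| = ∑ i, indVec K i :=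
      Finset.sum_congr rfl fun i _ => abs_of_nonneg (hKnn i)
    have hsum_w : ∑ i, |w i| = ∑ i, w i :=
      Finset.sum_congr rfl fun i _ => abs_of_nonneg (hwnn i)
    rw [hsum_ind, hsum_w] at key
    have hsw : ∑ i, w i = ∑ i, indVec K i + t * ∑ i, v i := by
      simp [hw, Finset.sum_add_distrib, Finset.mul_sum]
    rw [hsw] at key
    have hvpos : 0 < ∑ i, v i := by
      have hh : 0 < t * ∑ i, v i := by linarith
      nlinarith
    have hsum_x : ∑ i, |x₀ i| = ∑ i, x₀ i :=
      Finset.sum_congr rfl fun i _ => abs_of_nonneg (hx₀nn i)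
    have hsum_z : ∑ i, |z i| = ∑ i, z i :=
      Finset.sum_congr rfl fun i _ => abs_of_nonneg (hznn i)
    rw [hsum_x, hsum_z]
    have hsv : ∑ i, v i = ∑ i, z i - ∑ i, x₀ i := by
      simp [hv, Finset.sum_sub_distrib]
    linarith
end

section
/- Let A ∈ ℝ^{m×N} and K ⊆ {1,…,N}. Then the following are equivalent: (i) A satisfies the binary NSP with respect to K, i.e. ker(A) ∩ N_K ∩ H_K = {0}; (ii) the indicator vector 𝟙_K is the unique solution of the program (P_bin) with data b = A𝟙_K. -/
open Finset Matrix

/-- `N_K = {w : Σ_{i∈K}|w_i| ≥ Σ_{i∉K}|w_i|}`. -/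
def memNK {N : ℕ} (K : Finset (Fin N)) (w : Fin N → ℝ) : Prop :=
  ∑ i ∈ Kᶜ, |w i| ≤ ∑ i ∈ K, |w i|

/-- `H_K = {w : w_i ≤ 0 for i ∈ K, w_i ≥ 0 for i ∉ K}`. -/
def memHK {N : ℕ} (K : Finset (Fin N)) (w : Fin N → ℝ) : Prop :=
  (∀ i ∈ K, w i ≤ 0) ∧ ∀ i ∉ K, 0 ≤ w i

/-- `x₀` is the unique solution of the program (P_bin): minimize `‖x‖₁` subject to
`Ax = b` and `x ∈ [0,1]^N`, with data `b`. -/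
def IsUniqueSolBin {m N : ℕ} (A : Matrix (Fin m) (Fin N) ℝ) (b : Fin m → ℝ)
    (x₀ : Fin N → ℝ) : Prop :=
  A.mulVec x₀ = b ∧ (∀ i, x₀ i ∈ Set.Icc (0:ℝ) 1) ∧
    ∀ z : Fin N → ℝ, A.mulVec z = b → (∀ i, z i ∈ Set.Icc (0:ℝ) 1) → z ≠ x₀ →
      ∑ i, |x₀ i| < ∑ i, |z i|

lemma sum_abs_ind {N : ℕ} (K : Finset (Fin N)) :
    ∑ i, |indVec K i| = (K.card : ℝ) := by
  simp [indVec, apply_ite abs, Finset.sum_ite_mem]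

lemma split_sum {N : ℕ} (K : Finset (Fin N)) (f : Fin N → ℝ) :
    ∑ i, f i = ∑ i ∈ K, f i + ∑ i ∈ Kᶜ, f i :=
  (Finset.sum_add_sum_compl K f).symm

theorem stmt1 {m N : ℕ} (A : Matrix (Fin m) (Fin N) ℝ) (K : Finset (Fin N)) :
    (∀ w : Fin N → ℝ, A.mulVec w = 0 → memNK K w → memHK K w → w = 0) ↔
      IsUniqueSolBin A (A.mulVec (indVec K)) (indVec K) := by
  constructor
  · intro h
    refine ⟨rfl, fun i => ?_, fun z hAz hz01 hne => ?_⟩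
    · unfold indVec; split <;> norm_num
    · set w : Fin N → ℝ := z - indVec K with hw
      have hAw : A.mulVec w = 0 := by
        simp [hw, Matrix.mulVec_sub, hAz]
    -- z i values
      have hzK : ∀ i ∈ K, |z i| = 1 - |w i| := by
        intro i hi
        have h1 := (hz01 i).1
        have h2 := (hz01 i).2
        have hwi : w i = z i - 1 := by simp [hw, indVec, hi]
        rw [abs_of_nonneg h1, hwi, abs_of_nonpos (by linarith)]
        ring
      have hzKc : ∀ i ∈ Kᶜ, |z i| = |w i| := by
        intro i hi
        rw [Finset.mem_compl] at hi
        have hwi : w i = z i := by simp [hw, indVec, hi]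
        rw [hwi]
      have key : ∑ i, |z i| = (K.card : ℝ) - ∑ i ∈ K, |w i| + ∑ i ∈ Kᶜ, |w i| := by
        rw [split_sum K, Finset.sum_congr rfl hzK, Finset.sum_congr rfl hzKc,
          Finset.sum_sub_distrib]
        simp
      by_contra hle
      push_neg at hle
      rw [sum_abs_ind] at hle
      have hN : memNK K w := by
        unfold memNK; rw [key] at hle; linarith
      have hH : memHK K w := by
        constructor
        · intro i hi
          have h2 := (hz01 i).2
          simp [hw, indVec, hi]; linarith
        · intro i hi
          have h1 := (hz01 i).1
          simp [hw, indVec, hi]; linarith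
      have := h w hAw hN hH
      apply hne
      have : z - indVec K = 0 := this
      funext i
      have := congrFun this i
      simpa [sub_eq_zero] using this
  · rintro ⟨-, -, huniq⟩ w hAw hN hH
    by_contra hw0
    have hsum : (0:ℝ) ≤ ∑ i, |w i| := Finset.sum_nonneg fun i _ => abs_nonneg _
    set t : ℝ := (1 + ∑ i, |w i|)⁻¹ with ht
    have ht0 : 0 < t := by rw [ht]; positivity
    have htw : ∀ i, t * |w i| ≤ 1 := by
      intro i
      have h1 : |w i| ≤ ∑ j, |w j| :=
        Finset.single_le_sum (fun j _ => abs_nonneg (w j)) (Finset.mem_univ i)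
      have h2 : t * (1 + ∑ j, |w j|) = 1 := by
        rw [ht, inv_mul_cancel₀ (by positivity)]
      nlinarith [ht0.le]
    set z : Fin N → ℝ := fun i => indVec K i + t * w i with hz
    have hz01 : ∀ i, z i ∈ Set.Icc (0:ℝ) 1 := by
      intro i
      by_cases hi : i ∈ K
      · have hwi := hH.1 i hi
        have habs : |w i| = -w i := abs_of_nonpos hwi
        have := htw i
        rw [habs] at this
        constructor <;> simp [hz, indVec, hi] <;> nlinarith
      · have hwi := hH.2 i hi
        have habs : |w i| = w i := abs_of_nonneg hwi
        have := htw i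
        rw [habs] at this
        constructor <;> simp [hz, indVec, hi] <;> nlinarith
    have hAz : A.mulVec z = A.mulVec (indVec K) := by
      have : z = indVec K + t • w := by funext i; simp [hz, smul_eq_mul]
      rw [this, Matrix.mulVec_add, Matrix.mulVec_smul, hAw]
      simp
    have hne : z ≠ indVec K := by
      intro hzi
      apply hw0
      funext i
      have := congrFun hzi i
      simp [hz] at this
      rcases this with h | h
      · exact absurd h ht0.ne'
      · exact h
    have hlt := huniq z hAz hz01 hne
    rw [sum_abs_ind] at hlt
    have hzK : ∀ i ∈ K, |z i| = 1 - t * |w i| := by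
      intro i hi
      have h1 := (hz01 i).1
      rw [abs_of_nonneg h1]
      have : z i = 1 + t * w i := by simp [hz, indVec, hi]
      rw [this, abs_of_nonpos (hH.1 i hi)]
      ring
    have hzKc : ∀ i ∈ Kᶜ, |z i| = t * |w i| := by
      intro i hi
      rw [Finset.mem_compl] at hi
      have : z i = t * w i := by simp [hz, indVec, hi]
      rw [this, abs_mul, abs_of_pos ht0]
    have key : ∑ i, |z i|
        = (K.card : ℝ) - t * ∑ i ∈ K, |w i| + t * ∑ i ∈ Kᶜ, |w i| := by
      rw [split_sum K, Finset.sum_congr rfl hzK, Finset.sum_congr rfl hzKc,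
        Finset.sum_sub_distrib, Finset.mul_sum, Finset.mul_sum]
      simp
    rw [key] at hlt
    have hNK : ∑ i ∈ Kᶜ, |w i| ≤ ∑ i ∈ K, |w i| := hN
    nlinarith
end

section
/- Let A ∈ ℝ^{m×N} satisfy the binary NSP with respect to K ⊆ {1,…,N}, i.e. ker(A) ∩ N_K ∩ H_K = {0}. Then 𝟙_K is the unique solution with entries in {0,1} of the ℓ⁰-minimization problem: among all x ∈ {0,1}^N with Ax = A𝟙_K, the vector 𝟙_K is the unique minimizer of ‖x‖₀ (the number of nonzero entries); in fact every x ∈ {0,1}^N with Ax = A𝟙_K and x ≠ 𝟙_K satisfies ‖x‖₀ > ‖𝟙_K‖₀. -/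
open Finset Matrix

/-- `‖x‖₀`: the number of nonzero entries of `x`. -/
noncomputable def l0norm {N : ℕ} (x : Fin N → ℝ) : ℕ :=
  (Finset.univ.filter fun i => x i ≠ 0).card

theorem stmt2 {m N : ℕ} (A : Matrix (Fin m) (Fin N) ℝ) (K : Finset (Fin N))
    (hNSP : ∀ w : Fin N → ℝ, A.mulVec w = 0 → memNK K w → memHK K w → w = 0) :
    ∀ x : Fin N → ℝ, (∀ i, x i = 0 ∨ x i = 1) →
      A.mulVec x = A.mulVec (indVec K) → x ≠ indVec K →
        l0norm (indVec K) < l0norm x := by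
  intro x hx hAx hne
  set w : Fin N → ℝ := fun i => x i - indVec K i with hw
  have hker : A.mulVec w = 0 := by
    have hw2 : w = x - indVec K := rfl
    rw [hw2, Matrix.mulVec_sub, hAx, sub_self]
  have hH : memHK K w := by
    constructor
    · intro i hi
      rcases hx i with h | h <;> simp [hw, indVec, hi, h]
    · intro i hi
      rcases hx i with h | h <;> simp [hw, indVec, hi, h]
  have hwne : w ≠ 0 := by
    intro h
    apply hne
    funext i
    have := congrFun h i
    simpa [hw, sub_eq_zero] using this
  have hN : ¬ memNK K w := fun hN => hwne (hNSP w hker hN hH)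
  unfold memNK at hN
  push_neg at hN
  -- sum over K of |w| = number of i ∈ K with x i = 0
  have hK : ∑ i ∈ K, |w i| = ((K.filter fun i => x i = 0).card : ℝ) := by
    rw [Finset.card_filter, Nat.cast_sum]
    apply Finset.sum_congr rfl
    intro i hi
    rcases hx i with h | h <;> simp [hw, indVec, hi, h]
  have hKc : ∑ i ∈ Kᶜ, |w i| = ((Kᶜ.filter fun i => x i ≠ 0).card : ℝ) := by
    rw [Finset.card_filter, Nat.cast_sum]
    apply Finset.sum_congr rfl
    intro i hi
    have hi' : i ∉ K := by simpa using hi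
    rcases hx i with h | h <;> simp [hw, indVec, hi', h]
  rw [hK, hKc] at hN
  have hab : (K.filter fun i => x i = 0).card < (Kᶜ.filter fun i => x i ≠ 0).card := by
    exact_mod_cast hN
  have hpart : (K.filter fun i => x i ≠ 0).card + (K.filter fun i => x i = 0).card = K.card := by
    simpa using Finset.card_filter_add_card_filter_not (s := K)
      (p := fun i => x i ≠ 0)
  have hsplit : l0norm x
      = (K.filter fun i => x i ≠ 0).card + (Kᶜ.filter fun i => x i ≠ 0).card := by
    unfold l0norm
    rw [← Finset.card_union_of_disjoint]
    · congr 1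
      rw [← Finset.filter_union, Finset.union_compl]
    · exact Finset.disjoint_filter_filter (disjoint_compl_right)
  have hind : l0norm (indVec K) = K.card := by
    unfold l0norm
    congr 1
    ext i
    simp [indVec]
  rw [hind, hsplit]
  omega
end

section
/- For A ∈ ℝ^{m×N} and K ⊆ {1,…,N}, the following statements are equivalent: (i) every vector x₀ ∈ {0,1}^N with support contained in K is the unique solution of (P_bin) with data b = Ax₀; (ii) every vector x₀ ∈ [0,1]^N with support contained in K is the unique solution of (P_bin) with data b = Ax₀; (iii) A satisfies NSP₊ with respect to K, i.e. ker(A) ∩ N⁺ ∩ H⁺_K = {0}. -/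
open Finset Matrix

/-- `NSP₊` with respect to `K`: `ker(A) ∩ N⁺ ∩ H⁺_K = {0}`, where
`N⁺ = {w : Σᵢ wᵢ ≤ 0}` and `H⁺_K = {w : wᵢ ≥ 0 for i ∉ K}`. -/
def NSPplus {m N : ℕ} (A : Matrix (Fin m) (Fin N) ℝ) (K : Finset (Fin N)) : Prop :=
  ∀ w : Fin N → ℝ, A.mulVec w = 0 → (∑ i, w i ≤ 0) → (∀ i ∉ K, 0 ≤ w i) → w = 0

lemma nsp_to_gen {m N : ℕ} (A : Matrix (Fin m) (Fin N) ℝ) (K : Finset (Fin N))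
    (h : NSPplus A K) :
    ∀ x₀ : Fin N → ℝ, (∀ i, x₀ i ∈ Set.Icc (0:ℝ) 1) → (∀ i, x₀ i ≠ 0 → i ∈ K) →
      IsUniqueSolBin A (A.mulVec x₀) x₀ := by
  intro x₀ hx hsupp
  refine ⟨rfl, hx, ?_⟩
  intro z hz hzI hne
  by_contra h'
  push_neg at h'
  have hAw : A.mulVec (z - x₀) = 0 := by
    rw [Matrix.mulVec_sub, hz, sub_self]
  have hsum : ∑ i, (z - x₀) i ≤ 0 := by
    have h1 : ∑ i, (z - x₀) i = ∑ i, z i - ∑ i, x₀ i := by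
      simp [Finset.sum_sub_distrib]
    have h2 : ∑ i, z i ≤ ∑ i, x₀ i := by
      calc ∑ i, z i = ∑ i, |z i| := by
            refine Finset.sum_congr rfl fun i _ => ?_
            exact (abs_of_nonneg (hzI i).1).symm
        _ ≤ ∑ i, |x₀ i| := h'
        _ = ∑ i, x₀ i := by
            refine Finset.sum_congr rfl fun i _ => abs_of_nonneg (hx i).1
    linarith
  have hKpos : ∀ i ∉ K, 0 ≤ (z - x₀) i := by
    intro i hi
    have : x₀ i = 0 := by
      by_contra h0; exact hi (hsupp i h0)
    simp [this, (hzI i).1]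
  have := h (z - x₀) hAw hsum hKpos
  exact hne (by rwa [sub_eq_zero] at this)

lemma bin_to_nsp {m N : ℕ} (A : Matrix (Fin m) (Fin N) ℝ) (K : Finset (Fin N))
    (h : ∀ x₀ : Fin N → ℝ, (∀ i, x₀ i = 0 ∨ x₀ i = 1) → (∀ i, x₀ i ≠ 0 → i ∈ K) →
      IsUniqueSolBin A (A.mulVec x₀) x₀) :
    NSPplus A K := by
  intro w hAw hsum hK
  by_contra hw
  set x₀ : Fin N → ℝ := fun i => if w i < 0 then 1 else 0 with hx₀
  set t : ℝ := (1 + ∑ i, |w i|)⁻¹ with ht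
  have hsabs : (0:ℝ) ≤ ∑ i, |w i| := Finset.sum_nonneg fun i _ => abs_nonneg _
  have htpos : 0 < t := by positivity
  have hbound : ∀ i, t * |w i| ≤ 1 := by
    intro i
    have h1 : |w i| ≤ 1 + ∑ j, |w j| := by
      have := Finset.single_le_sum (f := fun j => |w j|)
        (fun j _ => abs_nonneg _) (Finset.mem_univ i)
      linarith
    rw [ht]
    rw [inv_mul_le_iff₀ (by positivity)]
    simpa using h1
  set z : Fin N → ℝ := fun i => x₀ i + t * w i with hzdef
  have hbin : ∀ i, x₀ i = 0 ∨ x₀ i = 1 := by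
    intro i; by_cases hi : w i < 0 <;> simp [hx₀, hi]
  have hsupp : ∀ i, x₀ i ≠ 0 → i ∈ K := by
    intro i hi
    by_contra hiK
    have := hK i hiK
    have : ¬ w i < 0 := not_lt.mpr this
    simp [hx₀, this] at hi
  have hzI : ∀ i, z i ∈ Set.Icc (0:ℝ) 1 := by
    intro i
    by_cases hi : w i < 0
    · have habs : |w i| = -w i := abs_of_neg hi
      have hb := hbound i
      rw [habs] at hb
      constructor
      · simp only [hzdef, hx₀, if_pos hi]; nlinarith
      · simp only [hzdef, hx₀, if_pos hi]; nlinarith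
    · push_neg at hi
      have habs : |w i| = w i := abs_of_nonneg hi
      have hb := hbound i
      rw [habs] at hb
      constructor
      · simp only [hzdef, hx₀, if_neg (not_lt.mpr hi)]; positivity
      · simp only [hzdef, hx₀, if_neg (not_lt.mpr hi)]; linarith
  have hAz : A.mulVec z = A.mulVec x₀ := by
    have : z = x₀ + t • w := by
      funext i; simp [hzdef, smul_eq_mul]
    rw [this, Matrix.mulVec_add, Matrix.mulVec_smul, hAw]
    simp
  have hzne : z ≠ x₀ := by
    intro hzx
    apply hw
    funext i
    have := congrFun hzx i
    simp only [hzdef] at this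
    have : t * w i = 0 := by linarith
    rcases mul_eq_zero.mp this with h1 | h1
    · exact absurd h1 (ne_of_gt htpos)
    · exact h1
  have huniq := h x₀ hbin hsupp
  have hlt := huniq.2.2 z hAz hzI hzne
  have hzsum : ∑ i, |z i| = ∑ i, x₀ i + t * ∑ i, w i := by
    rw [Finset.mul_sum]
    rw [← Finset.sum_add_distrib]
    refine Finset.sum_congr rfl fun i _ => ?_
    exact abs_of_nonneg (hzI i).1
  have hxsum : ∑ i, |x₀ i| = ∑ i, x₀ i := by
    refine Finset.sum_congr rfl fun i _ => ?_
    rcases hbin i with h1 | h1 <;> simp [h1]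
  rw [hzsum, hxsum] at hlt
  nlinarith

theorem stmt3 {m N : ℕ} (A : Matrix (Fin m) (Fin N) ℝ) (K : Finset (Fin N)) :
    ((∀ x₀ : Fin N → ℝ, (∀ i, x₀ i = 0 ∨ x₀ i = 1) → (∀ i, x₀ i ≠ 0 → i ∈ K) →
        IsUniqueSolBin A (A.mulVec x₀) x₀) ↔
      (∀ x₀ : Fin N → ℝ, (∀ i, x₀ i ∈ Set.Icc (0:ℝ) 1) → (∀ i, x₀ i ≠ 0 → i ∈ K) →
        IsUniqueSolBin A (A.mulVec x₀) x₀)) ∧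
    ((∀ x₀ : Fin N → ℝ, (∀ i, x₀ i ∈ Set.Icc (0:ℝ) 1) → (∀ i, x₀ i ≠ 0 → i ∈ K) →
        IsUniqueSolBin A (A.mulVec x₀) x₀) ↔
      NSPplus A K) := by
  have hIcc : ∀ (x₀ : Fin N → ℝ), (∀ i, x₀ i = 0 ∨ x₀ i = 1) →
      ∀ i, x₀ i ∈ Set.Icc (0:ℝ) 1 := by
    intro x₀ hb i
    rcases hb i with h | h <;> simp [h]
  constructor
  · constructor
    · intro h
      exact nsp_to_gen A K (bin_to_nsp A K h)
    · intro h x₀ hb hs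
      exact h x₀ (hIcc x₀ hb) hs
  · constructor
    · intro h
      exact bin_to_nsp A K fun x₀ hb hs => h x₀ (hIcc x₀ hb) hs
    · exact nsp_to_gen A K
end

section
/- For A ∈ ℝ^{m×N}, K ⊆ {1,…,N}, 0 < ρ < 1, and τ > 0, the following conditions are equivalent: (i) for every v ∈ H_K one has −Σ_{i∈K} v_i ≤ ρ Σ_{i∉K} v_i + τ‖Av‖₂ (the robust binary null space property with constants ρ, τ relative to K); (ii) for all x, z ∈ ℝ^N with z − x ∈ H_K one has Σ_{i∈K} x_i − Σ_{i∈K} z_i ≤ ρ Σ_{i∉K} |z_i − x_i| + τ‖A(z − x)‖₂; (iii) for every z ∈ ℝ^N with 0 ≤ z_i ≤ 1 for all i, one has |K| − Σ_{i∈K} |z_i| ≤ ρ Σ_{i∉K} |z_i| + τ‖A(z − 𝟙_K)‖₂. -/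
open Finset Matrix

/-- The Euclidean norm on `ℝ^m`. -/
noncomputable def l2norm {m : ℕ} (y : Fin m → ℝ) : ℝ :=
  Real.sqrt (∑ j, y j ^ 2)

lemma l2norm_smul {m : ℕ} (t : ℝ) (ht : 0 ≤ t) (y : Fin m → ℝ) :
    l2norm (t • y) = t * l2norm y := by
  unfold l2norm
  simp_rw [Pi.smul_apply, smul_eq_mul, mul_pow]
  rw [← Finset.mul_sum, Real.sqrt_mul (by positivity), Real.sqrt_sq ht]

theorem stmt9 {m N : ℕ} (A : Matrix (Fin m) (Fin N) ℝ) (K : Finset (Fin N))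
    (ρ τ : ℝ) (hρ0 : 0 < ρ) (hρ1 : ρ < 1) (hτ : 0 < τ) :
    List.TFAE
      [∀ v : Fin N → ℝ, memHK K v →
          -∑ i ∈ K, v i ≤ ρ * ∑ i ∈ Kᶜ, v i + τ * l2norm (A.mulVec v),
       ∀ x z : Fin N → ℝ, memHK K (z - x) →
          ∑ i ∈ K, x i - ∑ i ∈ K, z i ≤
            ρ * ∑ i ∈ Kᶜ, |z i - x i| + τ * l2norm (A.mulVec (z - x)),
       ∀ z : Fin N → ℝ, (∀ i, 0 ≤ z i ∧ z i ≤ 1) →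
          (K.card : ℝ) - ∑ i ∈ K, |z i| ≤
            ρ * ∑ i ∈ Kᶜ, |z i| + τ * l2norm (A.mulVec (z - indVec K))] := by
  tfae_have 1 → 2 := by
    intro h1 x z hzx
    have h := h1 (z - x) hzx
    have e1 : -∑ i ∈ K, (z - x) i = ∑ i ∈ K, x i - ∑ i ∈ K, z i := by
      simp [Finset.sum_sub_distrib]
    have e2 : ∑ i ∈ Kᶜ, (z - x) i = ∑ i ∈ Kᶜ, |z i - x i| := by
      refine Finset.sum_congr rfl fun i hi => ?_
      exact (abs_of_nonneg (hzx.2 i (Finset.mem_compl.mp hi))).symm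
    rw [e1, e2] at h
    exact h
  tfae_have 2 → 3 := by
    intro h2 z hz
    have hmem : memHK K (z - indVec K) := by
      constructor
      · intro i hi
        simp only [Pi.sub_apply, indVec, hi, if_true]
        linarith [(hz i).2]
      · intro i hi
        simp only [Pi.sub_apply, indVec, hi, if_false]
        linarith [(hz i).1]
    have h := h2 (indVec K) z hmem
    have e1 : ∑ i ∈ K, indVec K i = (K.card : ℝ) := by
      simp [indVec]
    have e2 : ∑ i ∈ K, z i = ∑ i ∈ K, |z i| :=
      Finset.sum_congr rfl fun i _ => (abs_of_nonneg (hz i).1).symm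
    have e3 : ∑ i ∈ Kᶜ, |z i - indVec K i| = ∑ i ∈ Kᶜ, |z i| := by
      refine Finset.sum_congr rfl fun i hi => ?_
      simp [indVec, Finset.mem_compl.mp hi]
    rw [e1, e2, e3] at h
    exact h
  tfae_have 3 → 1 := by
    intro h3 v hv
    set t : ℝ := (1 + ∑ i, |v i|)⁻¹ with ht
    have hsum : 0 ≤ ∑ i, |v i| := Finset.sum_nonneg fun i _ => abs_nonneg _
    have ht0 : 0 < t := by positivity
    have hbound : ∀ i, t * |v i| ≤ 1 := by
      intro i
      have h1 : |v i| ≤ ∑ j, |v j| :=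
        Finset.single_le_sum (f := fun j => |v j|) (fun j _ => abs_nonneg _) (Finset.mem_univ i)
      calc t * |v i| ≤ t * (1 + ∑ j, |v j|) := by
            apply mul_le_mul_of_nonneg_left (by linarith) ht0.le
        _ = 1 := by rw [ht]; field_simp
    set z : Fin N → ℝ := indVec K + t • v with hzdef
    have hz01 : ∀ i, 0 ≤ z i ∧ z i ≤ 1 := by
      intro i
      by_cases hi : i ∈ K
      · have hvi := hv.1 i hi
        have h1 := hbound i
        rw [abs_of_nonpos hvi, mul_neg] at h1
        have h2 : t * v i ≤ 0 := mul_nonpos_of_nonneg_of_nonpos ht0.le hvi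
        constructor <;> simp only [hzdef, Pi.add_apply, Pi.smul_apply, smul_eq_mul,
          indVec, hi, if_true] <;> linarith
      · have hvi := hv.2 i hi
        have h1 := hbound i
        rw [abs_of_nonneg hvi] at h1
        have h2 : 0 ≤ t * v i := mul_nonneg ht0.le hvi
        constructor <;> simp only [hzdef, Pi.add_apply, Pi.smul_apply, smul_eq_mul,
          indVec, hi, if_false] <;> linarith
    have h := h3 z hz01
    have hzi : z - indVec K = t • v := by
      simp [hzdef]
    rw [hzi, Matrix.mulVec_smul, l2norm_smul t ht0.le] at h
    have e4 : ∑ i ∈ K, |z i| = (K.card : ℝ) + t * ∑ i ∈ K, v i := by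
      have : ∀ i ∈ K, |z i| = 1 + t * v i := by
        intro i hi
        rw [abs_of_nonneg (hz01 i).1]
        simp [hzdef, indVec, hi]
      rw [Finset.sum_congr rfl this, Finset.sum_add_distrib, Finset.sum_const,
        ← Finset.mul_sum]
      simp
    have e5 : ∑ i ∈ Kᶜ, |z i| = t * ∑ i ∈ Kᶜ, v i := by
      have : ∀ i ∈ Kᶜ, |z i| = t * v i := by
        intro i hi
        rw [abs_of_nonneg (hz01 i).1]
        simp [hzdef, indVec, Finset.mem_compl.mp hi]
      rw [Finset.sum_congr rfl this, ← Finset.mul_sum]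
    rw [e4, e5] at h
    have hfin : t * (-∑ i ∈ K, v i) ≤ t * (ρ * ∑ i ∈ Kᶜ, v i + τ * l2norm (A.mulVec v)) := by
      ring_nf
      ring_nf at h
      linarith
    exact le_of_mul_le_mul_left hfin ht0
  tfae_finish
end

section
/- Let A ∈ ℝ^{m×N} satisfy the robust binary null space property with constants 0 < ρ < 1 and τ > 0 relative to K ⊆ {1,…,N}, i.e. −Σ_{i∈K} v_i ≤ ρ Σ_{i∉K} v_i + τ‖Av‖₂ for all v ∈ H_K. Suppose b = A𝟙_K + e with ‖e‖₂ ≤ η. Then every ẑ minimizing ‖z‖₁ over all z ∈ [0,1]^N with ‖Az − b‖₂ ≤ η satisfies ‖ẑ − 𝟙_K‖₁ ≤ 4τη/(1 − ρ). -/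
open Finset Matrix

lemma l2norm_eq_norm {m : ℕ} (y : Fin m → ℝ) :
    l2norm y = ‖(WithLp.equiv 2 (Fin m → ℝ)).symm y‖ := by
  rw [EuclideanSpace.norm_eq]
  simp [l2norm, Real.norm_eq_abs, sq_abs]

lemma l2norm_nonneg {m : ℕ} (y : Fin m → ℝ) : 0 ≤ l2norm y :=
  Real.sqrt_nonneg _

lemma l2norm_neg {m : ℕ} (y : Fin m → ℝ) : l2norm (-y) = l2norm y := by
  simp [l2norm]

lemma l2norm_add_le {m : ℕ} (x y : Fin m → ℝ) :
    l2norm (x + y) ≤ l2norm x + l2norm y := by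
  rw [l2norm_eq_norm, l2norm_eq_norm, l2norm_eq_norm]
  have : (WithLp.equiv 2 (Fin m → ℝ)).symm (x + y)
      = (WithLp.equiv 2 (Fin m → ℝ)).symm x + (WithLp.equiv 2 (Fin m → ℝ)).symm y := rfl
  rw [this]
  exact norm_add_le _ _

theorem stmt10 {m N : ℕ} (A : Matrix (Fin m) (Fin N) ℝ) (K : Finset (Fin N))
    (ρ τ η : ℝ) (hρ0 : 0 < ρ) (hρ1 : ρ < 1) (hτ : 0 < τ)
    (hRBNSP : ∀ v : Fin N → ℝ, memHK K v →
      -∑ i ∈ K, v i ≤ ρ * ∑ i ∈ Kᶜ, v i + τ * l2norm (A.mulVec v))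
    (b : Fin m → ℝ) (e : Fin m → ℝ) (hb : b = A.mulVec (indVec K) + e)
    (he : l2norm e ≤ η)
    (zhat : Fin N → ℝ) (hzhatbox : ∀ i, zhat i ∈ Set.Icc (0:ℝ) 1)
    (hzhatfeas : l2norm (A.mulVec zhat - b) ≤ η)
    (hzhatmin : ∀ z : Fin N → ℝ, (∀ i, z i ∈ Set.Icc (0:ℝ) 1) →
      l2norm (A.mulVec z - b) ≤ η → ∑ i, |zhat i| ≤ ∑ i, |z i|) :
    ∑ i, |zhat i - indVec K i| ≤ 4 * τ * η / (1 - ρ) := by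
  set v : Fin N → ℝ := fun i => zhat i - indVec K i with hv
  have hρ' : 0 < 1 - ρ := by linarith
  have hηnn : 0 ≤ η := le_trans (l2norm_nonneg e) he
  -- v ∈ H_K
  have hvK : ∀ i ∈ K, v i ≤ 0 := by
    intro i hi
    have := (hzhatbox i).2
    simp [hv, indVec, hi]
    linarith
  have hvKc : ∀ i ∉ K, 0 ≤ v i := by
    intro i hi
    have := (hzhatbox i).1
    simp [hv, indVec, hi]
    linarith
  have hmem : memHK K v := ⟨hvK, hvKc⟩
  -- indVec K is feasible
  have hfeasind : l2norm (A.mulVec (indVec K) - b) ≤ η := by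
    have : A.mulVec (indVec K) - b = -e := by rw [hb]; ring_nf
    rw [this, l2norm_neg]; exact he
  have hboxind : ∀ i, indVec K i ∈ Set.Icc (0:ℝ) 1 := by
    intro i; unfold indVec; split <;> simp
  have hmin := hzhatmin (indVec K) hboxind hfeasind
  -- sums
  set S := ∑ i ∈ K, v i with hS
  set T := ∑ i ∈ Kᶜ, v i with hT
  have hsumzhat : ∑ i, |zhat i| = S + (K.card : ℝ) + T := by
    have h1 : ∀ i, |zhat i| = zhat i := fun i => abs_of_nonneg (hzhatbox i).1
    simp only [h1]
    rw [← Finset.sum_add_sum_compl K zhat, hS, hT]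
    have h2 : ∑ i ∈ K, zhat i = ∑ i ∈ K, (v i + 1) := by
      apply Finset.sum_congr rfl
      intro i hi; simp [hv, indVec, hi]
    have h3 : ∑ i ∈ Kᶜ, zhat i = ∑ i ∈ Kᶜ, v i := by
      apply Finset.sum_congr rfl
      intro i hi; simp at hi; simp [hv, indVec, hi]
    rw [h2, h3, Finset.sum_add_distrib]
    simp

  have hsumind : ∑ i, |indVec K i| = (K.card : ℝ) := by
    rw [← Finset.sum_add_sum_compl K]
    have h2 : ∑ i ∈ K, |indVec K i| = (K.card : ℝ) := by
      have h21 : ∀ i ∈ K, |indVec K i| = 1 := fun i hi => by simp [indVec, hi]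
      rw [Finset.sum_congr rfl h21]; simp
    have h3 : ∑ i ∈ Kᶜ, |indVec K i| = 0 := by
      apply Finset.sum_eq_zero
      intro i hi; simp at hi; simp [indVec, hi]
    rw [h2, h3, add_zero]
  have hTS : T ≤ -S := by
    rw [hsumzhat, hsumind] at hmin; linarith
  -- l2norm bound
  have hAv : l2norm (A.mulVec v) ≤ 2 * η := by
    have h1 : A.mulVec v = (A.mulVec zhat - b) + e := by
      have : v = zhat - indVec K := rfl
      rw [this, A.mulVec_sub, hb]
      ring_nf
    rw [h1]
    calc l2norm ((A.mulVec zhat - b) + e) ≤ l2norm (A.mulVec zhat - b) + l2norm e :=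
          l2norm_add_le _ _
      _ ≤ 2 * η := by linarith
  have hnsp := hRBNSP v hmem
  rw [← hS, ← hT] at hnsp
  have hL : (1 - ρ) * (-S) ≤ τ * (2 * η) := by
    have h1 : τ * l2norm (A.mulVec v) ≤ τ * (2 * η) :=
      mul_le_mul_of_nonneg_left hAv hτ.le
    nlinarith [hnsp, hρ0]
  have hSneg : -S ≤ 2 * τ * η / (1 - ρ) := by
    rw [le_div_iff₀ hρ']
    nlinarith [hL]
  have hsumv : ∑ i, |v i| = -S + T := by
    rw [← Finset.sum_add_sum_compl K]
    have h2 : ∑ i ∈ K, |v i| = -S := by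
      rw [hS, ← Finset.sum_neg_distrib]
      apply Finset.sum_congr rfl
      intro i hi; exact abs_of_nonpos (hvK i hi)
    have h3 : ∑ i ∈ Kᶜ, |v i| = T := by
      rw [hT]
      apply Finset.sum_congr rfl
      intro i hi; simp at hi; exact abs_of_nonneg (hvKc i hi)
    rw [h2, h3]
  calc ∑ i, |zhat i - indVec K i| = -S + T := hsumv
    _ ≤ 2 * (-S) := by linarith
    _ ≤ 4 * τ * η / (1 - ρ) := by
        rw [le_div_iff₀ hρ'] at hSneg ⊢
        nlinarith
end

section
/- Let K₁, K₋₁ ⊆ {1,…,N} be disjoint, set K = K₁ ∪ K₋₁, k = |K|, and let x_±1 = 𝟙_{K₁} − 𝟙_{K₋₁}. For A ∈ ℝ^{m×N}, the following are equivalent: (i) x_±1 is the unique solution of (P_±ter) with data b = Ax_±1; (ii) A satisfies the bipolar ternary NSP with respect to K₁ and K₋₁, i.e. ker(A) ∩ N_K ∩ H_{K₁,K₋₁} = {0}. -/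
open Finset Matrix

/-- `H_{K₁,K₋₁} = {w : w_i ≤ 0 for i ∈ K₁, w_i ≥ 0 for i ∈ K₋₁}`. -/
def memHpm {N : ℕ} (K₁ Kneg : Finset (Fin N)) (w : Fin N → ℝ) : Prop :=
  (∀ i ∈ K₁, w i ≤ 0) ∧ ∀ i ∈ Kneg, 0 ≤ w i

/-- `x₀` is the unique solution of the program (P_±ter): minimize `‖x‖₁` subject to
`Ax = b` and `x ∈ [-1,1]^N`, with data `b`. -/
def IsUniqueSolTer {m N : ℕ} (A : Matrix (Fin m) (Fin N) ℝ) (b : Fin m → ℝ)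
    (x₀ : Fin N → ℝ) : Prop :=
  A.mulVec x₀ = b ∧ (∀ i, x₀ i ∈ Set.Icc (-1:ℝ) 1) ∧
    ∀ z : Fin N → ℝ, A.mulVec z = b → (∀ i, z i ∈ Set.Icc (-1:ℝ) 1) → z ≠ x₀ →
      ∑ i, |x₀ i| < ∑ i, |z i|

theorem stmt11 {m N : ℕ} (A : Matrix (Fin m) (Fin N) ℝ)
    (K₁ Kneg : Finset (Fin N)) (hdisj : Disjoint K₁ Kneg)
    (K : Finset (Fin N)) (hK : K = K₁ ∪ Kneg) (k : ℕ) (hk : K.card = k)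
    (xpm : Fin N → ℝ) (hxpm : xpm = indVec K₁ - indVec Kneg) :
    IsUniqueSolTer A (A.mulVec xpm) xpm ↔
      (∀ w : Fin N → ℝ, A.mulVec w = 0 → memNK K w → memHpm K₁ Kneg w → w = 0) := by
  -- pointwise values of xpm
  have hx1 : ∀ i ∈ K₁, xpm i = 1 := by
    intro i hi
    have h2 : i ∉ Kneg := Finset.disjoint_left.mp hdisj hi
    simp [hxpm, indVec, hi, h2]
  have hx2 : ∀ i ∈ Kneg, xpm i = -1 := by
    intro i hi
    have h2 : i ∉ K₁ := Finset.disjoint_right.mp hdisj hi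
    simp [hxpm, indVec, hi, h2]
  have hx0 : ∀ i ∉ K, xpm i = 0 := by
    intro i hi
    rw [hK, Finset.mem_union] at hi
    push_neg at hi
    simp [hxpm, indVec, hi.1, hi.2]
  have hxK : ∀ i ∈ K, |xpm i| = 1 := by
    intro i hi
    rw [hK, Finset.mem_union] at hi
    rcases hi with hi | hi
    · rw [hx1 i hi]; norm_num
    · rw [hx2 i hi]; norm_num
  have hsumx : ∑ i, |xpm i| = (k : ℝ) := by
    rw [← Finset.sum_add_sum_compl K fun i => |xpm i|]
    have e1 : ∑ i ∈ K, |xpm i| = ∑ i ∈ K, (1:ℝ) := Finset.sum_congr rfl hxK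
    have e2 : ∑ i ∈ Kᶜ, |xpm i| = ∑ i ∈ Kᶜ, (0:ℝ) := Finset.sum_congr rfl
      (fun i hi => by rw [hx0 i (Finset.mem_compl.mp hi), abs_zero])
    rw [e1, e2]
    simp [hk]
  have hbox : ∀ i, xpm i ∈ Set.Icc (-1:ℝ) 1 := by
    intro i
    by_cases h1 : i ∈ K₁
    · rw [hx1 i h1]; constructor <;> norm_num
    · by_cases h2 : i ∈ Kneg
      · rw [hx2 i h2]; constructor <;> norm_num
      · have : i ∉ K := by rw [hK, Finset.mem_union]; tauto
        rw [hx0 i this]; constructor <;> norm_num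
  constructor
  · rintro ⟨-, -, hmin⟩ w hw0 hNK hH
    by_contra hwne
    set M := ∑ i, |w i| with hM
    have hM0 : 0 ≤ M := Finset.sum_nonneg fun i _ => abs_nonneg _
    set t : ℝ := 1 / (M + 1) with ht
    have ht0 : 0 < t := by positivity
    have htM : t * M < 1 := by
      rw [ht, div_mul_eq_mul_div, div_lt_one (by linarith)]; linarith
    have habs : ∀ i, t * |w i| ≤ t * M := fun i =>
      mul_le_mul_of_nonneg_left
        (Finset.single_le_sum (fun j _ => abs_nonneg (w j)) (Finset.mem_univ i)) ht0.le
    have hlt : ∀ i, |t * w i| < 1 := by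
      intro i
      rw [abs_mul, abs_of_pos ht0]
      exact lt_of_le_of_lt (habs i) htM
    set z : Fin N → ℝ := fun i => xpm i + t * w i with hz
    have hAz : A.mulVec z = A.mulVec xpm := by
      have : z = xpm + t • w := by funext i; simp [hz, smul_eq_mul]
      rw [this, mulVec_add, mulVec_smul, hw0]
      simp
    have hzbox : ∀ i, z i ∈ Set.Icc (-1:ℝ) 1 := by
      intro i
      have h := abs_lt.mp (hlt i)
      by_cases h1 : i ∈ K₁
      · have hw := hH.1 i h1
        have : z i = 1 + t * w i := by rw [hz]; simp [hx1 i h1]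
        rw [this]
        constructor
        · linarith
        · nlinarith
      · by_cases h2 : i ∈ Kneg
        · have hw := hH.2 i h2
          have : z i = -1 + t * w i := by rw [hz]; simp [hx2 i h2]
          rw [this]
          constructor
          · nlinarith
          · linarith
        · have hiK : i ∉ K := by rw [hK, Finset.mem_union]; tauto
          have : z i = t * w i := by rw [hz]; simp [hx0 i hiK]
          rw [this]
          constructor
          · linarith
          · linarith
    have hsumz : ∑ i, |z i| ≤ (k : ℝ) := by
      have hzK : ∀ i ∈ K, |z i| = 1 - t * |w i| := by
        intro i hi
        have h := abs_lt.mp (hlt i)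
        rw [hK, Finset.mem_union] at hi
        rcases hi with hi | hi
        · have hw := hH.1 i hi
          have hzi : z i = 1 + t * w i := by rw [hz]; simp [hx1 i hi]
          rw [hzi, abs_of_nonneg (by linarith), abs_of_nonpos hw]
          ring
        · have hw := hH.2 i hi
          have hzi : z i = -1 + t * w i := by rw [hz]; simp [hx2 i hi]
          rw [hzi, abs_of_nonpos (by linarith), abs_of_nonneg hw]
          ring
      have hzKc : ∀ i ∈ Kᶜ, |z i| = t * |w i| := by
        intro i hi
        have hzi : z i = t * w i := by
          rw [hz]; simp [hx0 i (Finset.mem_compl.mp hi)]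
        rw [hzi, abs_mul, abs_of_pos ht0]
      have e1 : ∑ i ∈ K, |z i| = ∑ i ∈ K, (1 - t * |w i|) := Finset.sum_congr rfl hzK
      have e2 : ∑ i ∈ Kᶜ, |z i| = ∑ i ∈ Kᶜ, t * |w i| := Finset.sum_congr rfl hzKc
      rw [← Finset.sum_add_sum_compl K fun i => |z i|, e1, e2,
        Finset.sum_sub_distrib, ← Finset.mul_sum, ← Finset.mul_sum]
      have hNK' : t * ∑ i ∈ Kᶜ, |w i| ≤ t * ∑ i ∈ K, |w i| :=
        mul_le_mul_of_nonneg_left hNK ht0.le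
      have : ∑ i ∈ K, (1:ℝ) = (k : ℝ) := by simp [hk]
      rw [this]
      linarith
    have hzne : z ≠ xpm := by
      intro hcon
      apply hwne
      funext i
      have : z i = xpm i := congrFun hcon i
      rw [hz] at this
      have : t * w i = 0 := by simpa using this
      have := (mul_eq_zero.mp this).resolve_left (ne_of_gt ht0)
      simpa using this
    have := hmin z hAz hzbox hzne
    rw [hsumx] at this
    linarith
  · intro hNSP
    refine ⟨rfl, hbox, ?_⟩
    intro z hAz hzbox hzne
    set w : Fin N → ℝ := z - xpm with hw
    have hw0 : A.mulVec w = 0 := by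
      rw [hw, mulVec_sub, hAz, sub_self]
    have hwne : w ≠ 0 := sub_ne_zero.mpr hzne
    have hH : memHpm K₁ Kneg w := by
      constructor
      · intro i hi
        have := (hzbox i).2
        have hx := hx1 i hi
        simp only [hw, Pi.sub_apply, hx]
        linarith
      · intro i hi
        have := (hzbox i).1
        have hx := hx2 i hi
        simp only [hw, Pi.sub_apply, hx]
        linarith
    have hNK' : ¬ memNK K w := fun h => hwne (hNSP w hw0 h hH)
    rw [memNK, not_le] at hNK'
    have hzK : ∀ i ∈ K, 1 - |w i| ≤ |z i| := by
      intro i hi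
      have h1 : |xpm i| = 1 := hxK i hi
      have h2 : xpm i = z i - w i := by simp [hw]
      have h3 : |z i - w i| ≤ |z i| + |w i| := abs_sub _ _
      rw [← h2, h1] at h3
      linarith
    have hzKc : ∀ i ∈ Kᶜ, |z i| = |w i| := by
      intro i hi
      have : w i = z i := by
        simp [hw, hx0 i (Finset.mem_compl.mp hi)]
      rw [this]
    have e2 : ∑ i ∈ Kᶜ, |z i| = ∑ i ∈ Kᶜ, |w i| := Finset.sum_congr rfl hzKc
    rw [hsumx, ← Finset.sum_add_sum_compl K fun i => |z i|, e2]
    have h1 : ∑ i ∈ K, (1 - |w i|) ≤ ∑ i ∈ K, |z i| :=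
      Finset.sum_le_sum hzK
    rw [Finset.sum_sub_distrib] at h1
    have h2 : ∑ i ∈ K, (1:ℝ) = (k : ℝ) := by simp [hk]
    rw [h2] at h1
    linarith
end

section
/- Let L be a positive integer, let K₁,…,K_L ⊆ {1,…,N} be pairwise disjoint, set x₀ = Σ_{i=1}^L i·𝟙_{K_i} and K = ⋃_{i=1}^L K_i. For A ∈ ℝ^{m×N}, the following are equivalent: (i) A satisfies the unipolar finite NSP with respect to K_L and K, i.e. ker(A) ∩ N⁺ ∩ H_{K_L,K^C} = {0}; (ii) x₀ is the unique solution of (P_UF) with data b = Ax₀. -/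
open Finset Matrix

/-- `x₀` is the unique solution of the program (P_UF): minimize `‖x‖₁` subject to
`Ax = b` and `x ∈ [0,L]^N`, with data `b`. -/
def IsUniqueSolUF {m N : ℕ} (L : ℕ) (A : Matrix (Fin m) (Fin N) ℝ) (b : Fin m → ℝ)
    (x₀ : Fin N → ℝ) : Prop :=
  A.mulVec x₀ = b ∧ (∀ i, x₀ i ∈ Set.Icc (0:ℝ) L) ∧
    ∀ z : Fin N → ℝ, A.mulVec z = b → (∀ i, z i ∈ Set.Icc (0:ℝ) L) → z ≠ x₀ →
      ∑ i, |x₀ i| < ∑ i, |z i|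

theorem stmt16 {m N : ℕ} (L : ℕ) (hL : 0 < L)
    (K : ℕ → Finset (Fin N))
    (hdisj : ∀ i ∈ Finset.Icc 1 L, ∀ j ∈ Finset.Icc 1 L, i ≠ j → Disjoint (K i) (K j))
    (x₀ : Fin N → ℝ)
    (hx₀ : x₀ = fun j => ∑ i ∈ Finset.Icc 1 L, (i : ℝ) * (if j ∈ K i then 1 else 0))
    (Kfull : Finset (Fin N)) (hKfull : Kfull = (Finset.Icc 1 L).biUnion K)
    (A : Matrix (Fin m) (Fin N) ℝ) :
    (∀ w : Fin N → ℝ, A.mulVec w = 0 → (∑ i, w i ≤ 0) →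
        (∀ i ∈ K L, w i ≤ 0) → (∀ i ∉ Kfull, 0 ≤ w i) → w = 0) ↔
      IsUniqueSolUF L A (A.mulVec x₀) x₀ := by
  -- basic structure of x₀
  have hval : ∀ j : Fin N, ∀ i ∈ Finset.Icc 1 L, j ∈ K i → x₀ j = i := by
    intro j i hi hj
    rw [hx₀]
    simp only
    rw [Finset.sum_eq_single_of_mem i hi]
    · simp [hj]
    · intro i' hi' hne
      have := hdisj i' hi' i hi hne
      have : j ∉ K i' := fun h => (Finset.disjoint_left.mp this h) hj
      simp [this]
  have hoff : ∀ j : Fin N, j ∉ Kfull → x₀ j = 0 := by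
    intro j hj
    rw [hx₀]
    simp only
    apply Finset.sum_eq_zero
    intro i hi
    have : j ∉ K i := fun h => hj (hKfull ▸ Finset.mem_biUnion.mpr ⟨i, hi, h⟩)
    simp [this]
  have hLmem : L ∈ Finset.Icc 1 L := Finset.mem_Icc.mpr ⟨hL, le_refl L⟩
  have hKL : ∀ j ∈ K L, x₀ j = L := fun j hj => hval j L hLmem hj
  have hcases : ∀ j : Fin N, x₀ j = 0 ∨ ∃ i ∈ Finset.Icc 1 L, j ∈ K i ∧ x₀ j = i := by
    intro j
    by_cases hj : j ∈ Kfull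
    · right
      obtain ⟨i, hi, hji⟩ := Finset.mem_biUnion.mp (hKfull ▸ hj)
      exact ⟨i, hi, hji, hval j i hi hji⟩
    · left; exact hoff j hj
  have h0L : ∀ j : Fin N, x₀ j ∈ Set.Icc (0:ℝ) L := by
    intro j
    rcases hcases j with h | ⟨i, hi, _, h⟩
    · rw [h]; exact ⟨le_refl 0, Nat.cast_nonneg L⟩
    · rw [h]
      obtain ⟨h1, h2⟩ := Finset.mem_Icc.mp hi
      exact ⟨Nat.cast_nonneg i, Nat.cast_le.mpr h2⟩
  have hmid : ∀ j : Fin N, j ∉ K L → x₀ j ≤ (L : ℝ) - 1 := by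
    intro j hj
    rcases hcases j with h | ⟨i, hi, hji, h⟩
    · rw [h]
      have : (1:ℝ) ≤ L := by exact_mod_cast hL
      linarith
    · rw [h]
      obtain ⟨h1, h2⟩ := Finset.mem_Icc.mp hi
      have hne : i ≠ L := fun he => hj (he ▸ hji)
      have : i + 1 ≤ L := Nat.succ_le_of_lt (lt_of_le_of_ne h2 hne)
      have : (i:ℝ) + 1 ≤ L := by exact_mod_cast this
      linarith
  constructor
  · -- NSP → uniqueness
    intro hNSP
    refine ⟨rfl, h0L, ?_⟩
    intro z hz hzb hzne
    by_contra hlt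
    push_neg at hlt
    have hw : A.mulVec (z - x₀) = 0 := by
      rw [Matrix.mulVec_sub, hz, sub_self]
    have hzeq : z - x₀ = 0 := by
      apply hNSP (z - x₀) hw
      · have h1 : ∀ i, |z i| = z i := fun i => abs_of_nonneg (hzb i).1
        have h2 : ∀ i, |x₀ i| = x₀ i := fun i => abs_of_nonneg (h0L i).1
        have : ∑ i, z i ≤ ∑ i, x₀ i := by
          calc ∑ i, z i = ∑ i, |z i| := by simp_rw [h1]
          _ ≤ ∑ i, |x₀ i| := hlt
          _ = ∑ i, x₀ i := by simp_rw [h2]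
        simpa [Finset.sum_sub_distrib] using sub_nonpos.mpr this
      · intro i hi
        have := (hzb i).2
        have := hKL i hi
        simp only [Pi.sub_apply]
        linarith
      · intro i hi
        have := (hzb i).1
        have := hoff i hi
        simp only [Pi.sub_apply]
        linarith
    exact hzne (by rwa [sub_eq_zero] at hzeq)
  · -- uniqueness → NSP
    rintro ⟨-, -, hmin⟩ w hAw hsum hKLw hoffw
    by_contra hwne
    set S := ∑ i, |w i| with hS
    have hSnn : 0 ≤ S := Finset.sum_nonneg fun i _ => abs_nonneg _
    set t := (1 + S)⁻¹ with ht
    have ht0 : 0 < t := inv_pos.mpr (by linarith)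
    have hbd : ∀ j, t * |w j| ≤ 1 := by
      intro j
      have h1 : |w j| ≤ S := Finset.single_le_sum (fun i _ => abs_nonneg (w i)) (Finset.mem_univ j)
      have : t * |w j| ≤ t * (1 + S) := by
        apply mul_le_mul_of_nonneg_left (by linarith) (le_of_lt ht0)
      rwa [inv_mul_cancel₀ (by linarith : (1:ℝ) + S ≠ 0)] at this
    set z : Fin N → ℝ := x₀ + t • w with hzdef
    have hAz : A.mulVec z = A.mulVec x₀ := by
      rw [hzdef, Matrix.mulVec_add, Matrix.mulVec_smul, hAw, smul_zero, add_zero]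
    have hzbd : ∀ i, z i ∈ Set.Icc (0:ℝ) L := by
      intro j
      simp only [hzdef, Pi.add_apply, Pi.smul_apply, smul_eq_mul]
      have habs : |t * w j| ≤ 1 := by rw [abs_mul, abs_of_pos ht0]; exact hbd j
      have h1 := abs_le.mp habs
      have hL1 : (1:ℝ) ≤ L := by exact_mod_cast hL
      by_cases hj : j ∈ K L
      · have hx := hKL j hj
        have hwj := hKLw j hj
        have : t * w j ≤ 0 := mul_nonpos_of_nonneg_of_nonpos (le_of_lt ht0) hwj
        constructor <;> [skip; skip] <;> rw [hx] <;> linarith [h1.1, h1.2]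
      · by_cases hj2 : j ∈ Kfull
        · have := hmid j hj
          have := (h0L j).1
          rcases hcases j with h | ⟨i, hi, hji, h⟩
          · exfalso
            obtain ⟨i, hi, hji⟩ := Finset.mem_biUnion.mp (hKfull ▸ hj2)
            have := hval j i hi hji
            have h1' := (Finset.mem_Icc.mp hi).1
            have : (1:ℝ) ≤ x₀ j := by rw [this]; exact_mod_cast h1'
            linarith [h ▸ this]
          · have h1' := (Finset.mem_Icc.mp hi).1
            have hx1 : (1:ℝ) ≤ x₀ j := by rw [h]; exact_mod_cast h1'
            constructor <;> linarith [h1.1, h1.2]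
        · have hx := hoff j hj2
          have hwj := hoffw j hj2
          have : 0 ≤ t * w j := mul_nonneg (le_of_lt ht0) hwj
          constructor <;> rw [hx] <;> linarith [h1.2]
    have hzne : z ≠ x₀ := by
      intro h
      apply hwne
      have : t • w = 0 := by
        have := congrArg (· - x₀) h
        simpa [hzdef] using this
      funext j
      have := congrFun this j
      simp only [Pi.smul_apply, smul_eq_mul, Pi.zero_apply] at this
      exact (mul_eq_zero.mp this).resolve_left (ne_of_gt ht0) |>.symm ▸ rfl
    have hlt := hmin z hAz hzbd hzne
    have heq : ∑ i, |z i| ≤ ∑ i, |x₀ i| := by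
      have h1 : ∀ i, |z i| = z i := fun i => abs_of_nonneg (hzbd i).1
      have h2 : ∀ i, |x₀ i| = x₀ i := fun i => abs_of_nonneg (h0L i).1
      simp_rw [h1, h2, hzdef]
      have : ∑ i, (x₀ i + t * w i) = ∑ i, x₀ i + t * ∑ i, w i := by
        rw [Finset.sum_add_distrib, Finset.mul_sum]
      simp only [Pi.add_apply, Pi.smul_apply, smul_eq_mul]
      rw [this]
      nlinarith [mul_nonpos_of_nonneg_of_nonpos (le_of_lt ht0) hsum]
    linarith
end

section
/- Let L be a positive integer, let K₁,…,K_L ⊆ {1,…,N} be pairwise disjoint, set x₀ = Σ_{i=1}^L i·𝟙_{K_i}, K = ⋃_{i=1}^L K_i, and K̂ = K ∖ K_L. For A ∈ ℝ^{m×N}, the following are equivalent: (i) x₀ is the unique solution of (P_UF) with data b = Ax₀; (ii) every vector x̂ ∈ ℝ^N of the form x̂_i = x̃_i for i ∈ K̂, x̂_i = L for i ∈ K_L, and x̂_i = 0 otherwise, where x̃ ∈ (0,L)^N, is the unique solution of (P_UF) with data b = Ax̂. -/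
open Finset Matrix

/-- Key lemma: for any vector that vanishes off `Kfull`, equals `L` on `KL` and lies
strictly in `(0,L)` on `Khat = Kfull \ KL`, being the unique solution of (P_UF) is
equivalent to a cone condition on the null space of `A` that is independent of the
actual values of the vector. -/
lemma cone_iff {m N : ℕ} (L : ℕ) (hL : 0 < L)
    (Kfull KL Khat : Finset (Fin N)) (hKhat : Khat = Kfull \ KL) (hKL : KL ⊆ Kfull)
    (A : Matrix (Fin m) (Fin N) ℝ) (x : Fin N → ℝ)
    (h0 : ∀ j ∉ Kfull, x j = 0)
    (hLx : ∀ j ∈ KL, x j = (L:ℝ))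
    (hmid : ∀ j ∈ Khat, x j ∈ Set.Ioo (0:ℝ) (L:ℝ)) :
    IsUniqueSolUF L A (A.mulVec x) x ↔
      (∀ h : Fin N → ℝ, A.mulVec h = 0 → (∀ j, j ∉ Kfull → 0 ≤ h j) →
        (∀ j ∈ KL, h j ≤ 0) → h ≠ 0 → 0 < ∑ j, h j) := by
  have hL1 : (1:ℝ) ≤ L := by exact_mod_cast hL
  have hxbox : ∀ j, x j ∈ Set.Icc (0:ℝ) L := by
    intro j
    by_cases hj : j ∈ Kfull
    · by_cases hjL : j ∈ KL
      · rw [hLx j hjL]; exact ⟨by linarith, le_refl _⟩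
      · have hh : j ∈ Khat := by rw [hKhat]; exact Finset.mem_sdiff.2 ⟨hj, hjL⟩
        exact ⟨(hmid j hh).1.le, (hmid j hh).2.le⟩
    · rw [h0 j hj]; exact ⟨le_refl _, by linarith⟩
  constructor
  · rintro ⟨-, -, hmin⟩ h hker hpos hneg hne
    set T : Finset ℝ := insert (1:ℝ) (Khat.image fun j => min (x j) ((L:ℝ) - x j)) with hT
    have hTne : T.Nonempty := ⟨1, Finset.mem_insert_self _ _⟩
    set δ : ℝ := T.min' hTne with hδ
    have hδpos : 0 < δ := by
      rw [hδ]
      apply (Finset.lt_min'_iff _ _).2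
      intro y hy
      rcases Finset.mem_insert.1 hy with rfl | hy
      · norm_num
      · obtain ⟨j, hj, rfl⟩ := Finset.mem_image.1 hy
        have hm := hmid j hj
        exact lt_min hm.1 (by linarith [hm.2])
    have hδ1 : δ ≤ 1 := Finset.min'_le _ _ (Finset.mem_insert_self _ _)
    have hδj : ∀ j ∈ Khat, δ ≤ min (x j) ((L:ℝ) - x j) := fun j hj =>
      Finset.min'_le _ _ (Finset.mem_insert_of_mem (Finset.mem_image_of_mem _ hj))
    set S : ℝ := ∑ j, |h j| with hS
    have hSnn : 0 ≤ S := Finset.sum_nonneg fun j _ => abs_nonneg _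
    set ε : ℝ := δ / (1 + S) with hε
    have hεpos : 0 < ε := div_pos hδpos (by linarith)
    have hbound : ∀ j, |ε * h j| ≤ δ := by
      intro j
      have h1 : |h j| ≤ S := Finset.single_le_sum (fun i _ => abs_nonneg (h i)) (Finset.mem_univ j)
      rw [abs_mul, abs_of_nonneg hεpos.le, hε, div_mul_eq_mul_div, div_le_iff₀ (by linarith)]
      nlinarith [abs_nonneg (h j)]
    set z : Fin N → ℝ := x + ε • h with hz
    have hzval : ∀ j, z j = x j + ε * h j := fun j => rfl
    have hzbox : ∀ j, z j ∈ Set.Icc (0:ℝ) L := by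
      intro j
      have hb3 := abs_le.1 (hbound j)
      rw [Set.mem_Icc, hzval]
      by_cases hj : j ∈ Kfull
      · by_cases hjL : j ∈ KL
        · have hx := hLx j hjL
          have hn : ε * h j ≤ 0 :=
            mul_nonpos_iff.2 (Or.inl ⟨hεpos.le, hneg j hjL⟩)
          constructor
          · rw [hx]; linarith [hb3.1]
          · rw [hx]; linarith
        · have hjh : j ∈ Khat := by rw [hKhat]; exact Finset.mem_sdiff.2 ⟨hj, hjL⟩
          have hm := hδj j hjh
          have h1 : δ ≤ x j := le_trans hm (min_le_left _ _)
          have h2 : δ ≤ (L:ℝ) - x j := le_trans hm (min_le_right _ _)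
          exact ⟨by linarith [hb3.1], by linarith [hb3.2]⟩
      · have hx := h0 j hj
        have hp : 0 ≤ ε * h j := mul_nonneg hεpos.le (hpos j hj)
        rw [hx]
        exact ⟨by linarith, by linarith [hb3.2]⟩
    have hAz : A.mulVec z = A.mulVec x := by
      rw [hz, Matrix.mulVec_add, Matrix.mulVec_smul, hker, smul_zero, add_zero]
    have hzne : z ≠ x := by
      intro hcontra
      apply hne
      funext j
      have hzj : z j = x j := congrFun hcontra j
      rw [hzval] at hzj
      have hεh : ε * h j = 0 := by linarith
      have := (mul_eq_zero.1 hεh).resolve_left (ne_of_gt hεpos)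
      simpa using this
    have hlt := hmin z hAz hzbox hzne
    have hx_abs : ∑ i, |x i| = ∑ i, x i :=
      Finset.sum_congr rfl fun i _ => abs_of_nonneg (hxbox i).1
    have hz_abs : ∑ i, |z i| = ∑ i, z i :=
      Finset.sum_congr rfl fun i _ => abs_of_nonneg (hzbox i).1
    rw [hx_abs, hz_abs] at hlt
    have hzsum : ∑ i, z i = ∑ i, x i + ε * ∑ i, h i := by
      simp only [hzval]
      rw [Finset.sum_add_distrib, Finset.mul_sum]
    rw [hzsum] at hlt
    have hεsum : 0 < ε * ∑ i, h i := by linarith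
    by_contra hcon
    push_neg at hcon
    nlinarith
  · intro P
    refine ⟨rfl, hxbox, ?_⟩
    intro z hAz hzbox hzne
    have hker : A.mulVec (z - x) = 0 := by rw [Matrix.mulVec_sub, hAz, sub_self]
    have hsum : 0 < ∑ j, (z - x) j := by
      apply P _ hker
      · intro j hj
        rw [Pi.sub_apply, h0 j hj]
        linarith [(hzbox j).1]
      · intro j hj
        rw [Pi.sub_apply, hLx j hj]
        linarith [(hzbox j).2]
      · exact sub_ne_zero_of_ne hzne
    have hx_abs : ∑ i, |x i| = ∑ i, x i :=
      Finset.sum_congr rfl fun i _ => abs_of_nonneg (hxbox i).1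
    have hz_abs : ∑ i, |z i| = ∑ i, z i :=
      Finset.sum_congr rfl fun i _ => abs_of_nonneg (hzbox i).1
    have hsub : ∑ j, (z - x) j = ∑ j, z j - ∑ j, x j := by
      simp only [Pi.sub_apply]
      rw [Finset.sum_sub_distrib]
    rw [hx_abs, hz_abs]
    linarith [hsub ▸ hsum]

theorem stmt17 {m N : ℕ} (L : ℕ) (hL : 0 < L)
    (K : ℕ → Finset (Fin N))
    (hdisj : ∀ i ∈ Finset.Icc 1 L, ∀ j ∈ Finset.Icc 1 L, i ≠ j → Disjoint (K i) (K j))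
    (x₀ : Fin N → ℝ)
    (hx₀ : x₀ = fun j => ∑ i ∈ Finset.Icc 1 L, (i : ℝ) * (if j ∈ K i then 1 else 0))
    (Kfull : Finset (Fin N)) (hKfull : Kfull = (Finset.Icc 1 L).biUnion K)
    (Khat : Finset (Fin N)) (hKhat : Khat = Kfull \ K L)
    (A : Matrix (Fin m) (Fin N) ℝ) :
    IsUniqueSolUF L A (A.mulVec x₀) x₀ ↔
      (∀ xt : Fin N → ℝ, (∀ i, xt i ∈ Set.Ioo (0:ℝ) L) →
        ∀ xhat : Fin N → ℝ,
          (xhat = fun i => if i ∈ Khat then xt i else if i ∈ K L then (L : ℝ) else 0) →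
          IsUniqueSolUF L A (A.mulVec xhat) xhat) := by
  have hLr : (0:ℝ) < L := by exact_mod_cast hL
  have hmemL : L ∈ Finset.Icc 1 L := Finset.mem_Icc.2 ⟨hL, le_refl L⟩
  have hKLsub : K L ⊆ Kfull := by
    rw [hKfull]; exact Finset.subset_biUnion_of_mem K hmemL
  -- values of x₀
  have hx0 : ∀ j ∉ Kfull, x₀ j = 0 := by
    intro j hj
    rw [hx₀]
    apply Finset.sum_eq_zero
    intro i hi
    have hji : j ∉ K i := fun hc => hj (hKfull ▸ Finset.mem_biUnion.2 ⟨i, hi, hc⟩)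
    simp [hji]
  have hval : ∀ i ∈ Finset.Icc 1 L, ∀ j ∈ K i, x₀ j = i := by
    intro i hi j hj
    rw [hx₀]
    simp only
    rw [Finset.sum_eq_single i]
    · simp [hj]
    · intro b hb hbne
      have hjb : j ∉ K b := Finset.disjoint_right.1 (hdisj b hb i hi hbne) hj
      simp [hjb]
    · intro hcon; exact absurd hi hcon
  have hxL : ∀ j ∈ K L, x₀ j = (L:ℝ) := fun j hj => hval L hmemL j hj
  have hxmid : ∀ j ∈ Khat, x₀ j ∈ Set.Ioo (0:ℝ) L := by
    intro j hj
    rw [hKhat] at hj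
    obtain ⟨hjf, hjL⟩ := Finset.mem_sdiff.1 hj
    rw [hKfull] at hjf
    obtain ⟨i, hi, hji⟩ := Finset.mem_biUnion.1 hjf
    obtain ⟨h1, h2⟩ := Finset.mem_Icc.1 hi
    have hiL : i ≠ L := fun hc => hjL (hc ▸ hji)
    have hilt : i < L := lt_of_le_of_ne h2 hiL
    have hipos : 0 < i := h1
    rw [hval i hi j hji]
    exact ⟨by exact_mod_cast hipos, by exact_mod_cast hilt⟩
  -- values of any admissible x̂
  have hhatprops : ∀ xt : Fin N → ℝ, (∀ i, xt i ∈ Set.Ioo (0:ℝ) L) →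
      ∀ xhat : Fin N → ℝ,
      (xhat = fun i => if i ∈ Khat then xt i else if i ∈ K L then (L : ℝ) else 0) →
      (∀ j ∉ Kfull, xhat j = 0) ∧ (∀ j ∈ K L, xhat j = (L:ℝ)) ∧
        (∀ j ∈ Khat, xhat j ∈ Set.Ioo (0:ℝ) L) := by
    intro xt hxt xhat hxhat
    have hKhsub : Khat ⊆ Kfull := by rw [hKhat]; exact Finset.sdiff_subset
    refine ⟨?_, ?_, ?_⟩
    · intro j hj
      have h1 : j ∉ Khat := fun hc => hj (hKhsub hc)
      have h2 : j ∉ K L := fun hc => hj (hKLsub hc)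
      rw [hxhat]; simp [h1, h2]
    · intro j hj
      have h1 : j ∉ Khat := by
        rw [hKhat]; intro hc; exact (Finset.mem_sdiff.1 hc).2 hj
      rw [hxhat]; simp [h1, hj]
    · intro j hj
      rw [hxhat]; simp only [if_pos hj]; exact hxt j
  rw [cone_iff L hL Kfull (K L) Khat hKhat hKLsub A x₀ hx0 hxL hxmid]
  constructor
  · intro P xt hxt xhat hxhat
    obtain ⟨p1, p2, p3⟩ := hhatprops xt hxt xhat hxhat
    exact (cone_iff L hL Kfull (K L) Khat hKhat hKLsub A xhat p1 p2 p3).2 P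
  · intro H
    have hxtIoo : ∀ i : Fin N, (fun _ : Fin N => (L:ℝ)/2) i ∈ Set.Ioo (0:ℝ) L :=
      fun i => ⟨by linarith, by linarith⟩
    have hU := H _ hxtIoo
      (fun i => if i ∈ Khat then (L:ℝ)/2 else if i ∈ K L then (L:ℝ) else 0) rfl
    obtain ⟨p1, p2, p3⟩ := hhatprops _ hxtIoo
      (fun i => if i ∈ Khat then (L:ℝ)/2 else if i ∈ K L then (L:ℝ) else 0) rfl
    exact (cone_iff L hL Kfull (K L) Khat hKhat hKLsub A _ p1 p2 p3).1 hU
end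

section
/- Let L be a positive integer, let K_L and K̂ be disjoint subsets of {1,…,N} with K = K_L ∪ K̂, and let x̂ ∈ ℝ^N satisfy x̂_i ∈ (0,L) for i ∈ K̂, x̂_i = L for i ∈ K_L, and x̂_i = 0 for i ∉ K. Then the set {s ∈ ℝ^N : ‖y‖₁ ≥ ‖x̂‖₁ + ⟨s, y − x̂⟩ for all y ∈ [0,L]^N} (the subdifferential at x̂ of the ℓ¹-norm restricted to [0,L]^N) equals {s ∈ ℝ^N : s_i ≥ 1 for i ∈ K_L, s_i = 1 for i ∈ K̂, and s_i ≤ 1 for i ∉ K}. -/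
open Finset

theorem stmt18 {N : ℕ} (L : ℕ) (hL : 0 < L)
    (KL Khat : Finset (Fin N)) (hdisj : Disjoint KL Khat)
    (K : Finset (Fin N)) (hK : K = KL ∪ Khat)
    (xhat : Fin N → ℝ)
    (h1 : ∀ i ∈ Khat, xhat i ∈ Set.Ioo (0:ℝ) L)
    (h2 : ∀ i ∈ KL, xhat i = L)
    (h3 : ∀ i ∉ K, xhat i = 0) :
    {s : Fin N → ℝ | ∀ y : Fin N → ℝ, (∀ i, y i ∈ Set.Icc (0:ℝ) L) →
        ∑ i, |xhat i| + ∑ i, s i * (y i - xhat i) ≤ ∑ i, |y i|} =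
      {s : Fin N → ℝ | (∀ i ∈ KL, 1 ≤ s i) ∧ (∀ i ∈ Khat, s i = 1) ∧
        ∀ i ∉ K, s i ≤ 1} := by
  have hL' : (0:ℝ) < L := by exact_mod_cast hL
  have hx : ∀ j, xhat j ∈ Set.Icc (0:ℝ) L := by
    intro j
    by_cases hj : j ∈ KL
    · rw [h2 j hj]; exact ⟨hL'.le, le_refl _⟩
    · by_cases hj' : j ∈ Khat
      · exact ⟨(h1 j hj').1.le, (h1 j hj').2.le⟩
      · have : j ∉ K := by rw [hK]; simp [hj, hj']
        rw [h3 j this]; exact ⟨le_refl _, hL'.le⟩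
  ext s
  simp only [Set.mem_setOf_eq]
  constructor
  · intro hs
    have hkey : ∀ i0 : Fin N, ∀ c : ℝ, c ∈ Set.Icc (0:ℝ) L →
        |xhat i0| + s i0 * (c - xhat i0) ≤ |c| := by
      intro i0 c hc
      have hfeas : ∀ i, Function.update xhat i0 c i ∈ Set.Icc (0:ℝ) L := by
        intro i
        by_cases h : i = i0
        · subst h; simp [hc]
        · rw [Function.update_of_ne h]; exact hx i
      have h := hs _ hfeas
      have e1 : ∑ i, s i * (Function.update xhat i0 c i - xhat i)
          = s i0 * (c - xhat i0) := by
        rw [Fintype.sum_eq_single i0]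
        · simp
        · intro j hj; rw [Function.update_of_ne hj]; ring
      have e2 : ∑ i, |Function.update xhat i0 c i|
          = |c| + ∑ i ∈ univ.erase i0, |xhat i| := by
        rw [← Finset.add_sum_erase _ _ (mem_univ i0)]
        congr 1
        · simp
        · apply Finset.sum_congr rfl
          intro j hj
          rw [Function.update_of_ne (Finset.ne_of_mem_erase hj)]
      have e3 : ∑ i, |xhat i| = |xhat i0| + ∑ i ∈ univ.erase i0, |xhat i| :=
        (Finset.add_sum_erase _ _ (mem_univ i0)).symm
      rw [e1, e2, e3] at h
      linarith
    refine ⟨?_, ?_, ?_⟩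
    · intro i hi
      have h := hkey i 0 ⟨le_refl _, hL'.le⟩
      rw [h2 i hi] at h
      rw [abs_of_nonneg hL'.le] at h
      simp at h
      nlinarith
    · intro i hi
      have h0 := hkey i 0 ⟨le_refl _, hL'.le⟩
      have hL2 := hkey i L ⟨hL'.le, le_refl _⟩
      have hxi := h1 i hi
      rw [abs_of_pos hxi.1] at h0 hL2
      rw [abs_of_nonneg hL'.le] at hL2
      simp at h0
      nlinarith [hxi.1, hxi.2]
    · intro i hi
      have h := hkey i L ⟨hL'.le, le_refl _⟩
      rw [h3 i hi, abs_of_nonneg hL'.le] at h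
      simp at h
      nlinarith
  · rintro ⟨hA, hB, hC⟩ y hy
    rw [← Finset.sum_add_distrib]
    apply Finset.sum_le_sum
    intro i _
    have hyi := hy i
    by_cases hi : i ∈ KL
    · rw [h2 i hi, abs_of_nonneg hL'.le, abs_of_nonneg hyi.1]
      nlinarith [hA i hi, hyi.2]
    · by_cases hi' : i ∈ Khat
      · rw [hB i hi', abs_of_nonneg hyi.1, abs_of_nonneg (hx i).1]
        nlinarith [(h1 i hi').1]
      · have hiK : i ∉ K := by rw [hK]; simp [hi, hi']
        rw [h3 i hiK, abs_of_nonneg hyi.1, abs_zero]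
        nlinarith [mul_nonneg (sub_nonneg.2 (hC i hiK)) hyi.1]
end
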